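/- arXiv:1407.7283 — 2 statements merged into one kernel-verified Lean document; each statement's English description precedes it below -/
import Mathlib

section
/- Let K be a field, m ≥ 2 an integer, t_1, …, t_{m−1} pairwise distinct nonzero elements of K, and a_1, a_2 ∈ K. For j = 1, …, m−1 let v_j = Σ_{i=1}^{m−2} t_j^i e_i + e_{m−1} + t_j^{m−1} e_m ∈ K^m, and let w = a_1 e_{m−1} + a_2 e_m, where e_1, …, e_m is the standard basis of K^m. Then the m vectors v_1, …, v_{m−1}, w are linearly dependent if and only if (−1)^m a_2 = a_1 · ∏_{j=1}^{m−1} t_j. -/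
/-- `paperBasis K m n` is the standard basis vector `e_n` of `K^m` in the paper's
1-indexed notation (`n` ranges over `1, …, m`). -/
def paperBasis (K : Type*) [Zero K] [One K] (m n : ℕ) : Fin m → K :=
  fun j => if (j : ℕ) + 1 = n then 1 else 0

theorem stmt6 (K : Type*) [Field K] (m : ℕ) (hm : 2 ≤ m)
    (t : Fin (m - 1) → K) (htinj : Function.Injective t) (ht0 : ∀ j, t j ≠ 0)
    (a₁ a₂ : K)
    (v : Fin (m - 1) → Fin m → K)
    (hv : ∀ j, v j = (∑ i ∈ Finset.Icc 1 (m - 2), (t j) ^ i • paperBasis K m i) +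
        paperBasis K m (m - 1) + (t j) ^ (m - 1) • paperBasis K m m)
    (w : Fin m → K)
    (hw : w = a₁ • paperBasis K m (m - 1) + a₂ • paperBasis K m m) :
    ¬ LinearIndependent K (Sum.elim v (fun _ : Unit => w)) ↔
      (-1 : K) ^ m * a₂ = a₁ * ∏ j, t j := by
  obtain ⟨n, rfl⟩ : ∃ n, m = n + 2 := ⟨m - 2, by omega⟩
  have hvc : ∀ (j : Fin (n + 1)) (c : Fin (n + 2)),
      v j c = if (c : ℕ) < n then t j ^ ((c : ℕ) + 1)
        else if (c : ℕ) = n then 1 else t j ^ (n + 1) := by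
    intro j c
    rw [hv j]
    simp only [Pi.add_apply, Finset.sum_apply, Pi.smul_apply, paperBasis, smul_eq_mul]
    have hicc : (n + 2 : ℕ) - 2 = n := by omega
    have h11 : (n + 2 : ℕ) - 1 = n + 1 := by omega
    rw [hicc, h11]
    rcases lt_trichotomy (c : ℕ) n with h | h | h
    · rw [if_pos h, if_neg (by omega : ¬ ((c:ℕ) + 1 = n + 1)),
        if_neg (by omega : ¬ ((c:ℕ) + 1 = n + 2))]
      rw [Finset.sum_eq_single ((c : ℕ) + 1)]
      · simp
      · intro b _ hb; simp [Ne.symm hb]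
      · intro hmem; exact absurd (Finset.mem_Icc.mpr ⟨by omega, by omega⟩) hmem
    · rw [if_pos (by omega : (c:ℕ) + 1 = n + 1),
        if_neg (by omega : ¬ ((c:ℕ) + 1 = n + 2)),
        if_neg (by omega : ¬ ((c:ℕ) < n)), if_pos h]
      rw [Finset.sum_eq_zero]
      · ring
      · intro b hb
        rw [Finset.mem_Icc] at hb
        rw [if_neg (by omega : ¬ ((c:ℕ) + 1 = b)), mul_zero]
    · have hc2 : (c : ℕ) = n + 1 := by omega
      rw [if_neg (by omega : ¬ ((c:ℕ) + 1 = n + 1)),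
        if_pos (by omega : (c:ℕ) + 1 = n + 2),
        if_neg (by omega : ¬ ((c:ℕ) < n)), if_neg (by omega : ¬ ((c:ℕ) = n))]
      rw [Finset.sum_eq_zero]
      · ring
      · intro b hb
        rw [Finset.mem_Icc] at hb
        rw [if_neg (by omega : ¬ ((c:ℕ) + 1 = b)), mul_zero]
  have hwc : ∀ c : Fin (n + 2),
      w c = if (c : ℕ) = n then a₁ else if (c : ℕ) = n + 1 then a₂ else 0 := by
    intro c
    rw [hw]
    simp only [Pi.add_apply, Pi.smul_apply, paperBasis, smul_eq_mul]
    have h11 : (n + 2 : ℕ) - 1 = n + 1 := by omega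
    rw [h11]
    rcases lt_trichotomy (c : ℕ) n with h | h | h
    · rw [if_neg (by omega : ¬ ((c:ℕ) + 1 = n + 1)),
        if_neg (by omega : ¬ ((c:ℕ) + 1 = n + 2)),
        if_neg (by omega : ¬ ((c:ℕ) = n)), if_neg (by omega : ¬ ((c:ℕ) = n + 1))]
      ring
    · rw [if_pos (by omega : (c:ℕ) + 1 = n + 1),
        if_neg (by omega : ¬ ((c:ℕ) + 1 = n + 2)), if_pos h]
      ring
    · rw [if_neg (by omega : ¬ ((c:ℕ) + 1 = n + 1)),
        if_pos (by omega : (c:ℕ) + 1 = n + 2),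
        if_neg (by omega : ¬ ((c:ℕ) = n)), if_pos (by omega : (c:ℕ) = n + 1)]
      ring
  classical
  -- the nice matrix N
  set N : Matrix (Fin (n + 2)) (Fin (n + 2)) K :=
    Matrix.of (fun r c => if h : (r : ℕ) < n + 1 then t ⟨r, h⟩ ^ (c : ℕ)
      else if (c : ℕ) = 0 then a₁ else if (c : ℕ) = n + 1 then a₂ else 0) with hN
  set σ : Equiv.Perm (Fin (n + 2)) := Fin.cycleRange ⟨n, by omega⟩ with hσ
  set M : Matrix (Fin (n + 2)) (Fin (n + 2)) K := N.submatrix id σ with hM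
  -- M rows are the v's and w
  have hMv : ∀ j : Fin (n + 1), M j.castSucc = v j := by
    intro j
    funext c
    rw [hvc]
    simp only [hM, Matrix.submatrix_apply, id_eq, hN, Matrix.of_apply]
    have hlt : ((j.castSucc : Fin (n + 2)) : ℕ) < n + 1 := by simp; omega
    rw [dif_pos hlt]
    have hjj : (⟨((j.castSucc : Fin (n + 2)) : ℕ), hlt⟩ : Fin (n + 2 - 1)) = j := by
      ext; simp
    rw [hjj]
    rcases lt_trichotomy (c : ℕ) n with h | h | h
    · rw [if_pos h]
      have hσc : σ c = ⟨(c : ℕ) + 1, by omega⟩ := by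
        rw [hσ, Fin.cycleRange_of_lt (by simp [Fin.lt_def, h])]
        ext
        rw [Fin.val_add_one_of_lt (by simp [Fin.lt_def]; omega)]
      rw [hσc]
    · rw [if_neg (by omega), if_pos h]
      have hc : c = ⟨n, by omega⟩ := by ext; exact h
      have hσc : σ c = 0 := by rw [hσ, hc, Fin.cycleRange_self]
      rw [hσc, Fin.val_zero, pow_zero]
    · rw [if_neg (by omega), if_neg (by omega)]
      have hσc : σ c = c := by
        rw [hσ, Fin.cycleRange_of_gt (by simp [Fin.lt_def]; omega)]
      rw [hσc]
      congr 1
      omega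
  have hMw : M (Fin.last (n + 1)) = w := by
    funext c
    rw [hwc]
    simp only [hM, Matrix.submatrix_apply, id_eq, hN, Matrix.of_apply]
    rw [dif_neg (by simp)]
    rcases lt_trichotomy (c : ℕ) n with h | h | h
    · have hσc : σ c = ⟨(c : ℕ) + 1, by omega⟩ := by
        rw [hσ, Fin.cycleRange_of_lt (by simp [Fin.lt_def, h])]
        ext
        rw [Fin.val_add_one_of_lt (by simp [Fin.lt_def]; omega)]
      rw [hσc]
      simp only
      rw [if_neg (by omega), if_neg (by omega), if_neg (by omega), if_neg (by omega)]
    · have hc : c = ⟨n, by omega⟩ := by ext; exact h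
      have hσc : σ c = 0 := by rw [hσ, hc, Fin.cycleRange_self]
      rw [hσc]
      simp [h]
    · have hσc : σ c = c := by
        rw [hσ, Fin.cycleRange_of_gt (by simp [Fin.lt_def]; omega)]
      rw [hσc]
      simp [show ¬((c : ℕ) = 0) by omega, show (c : ℕ) = n + 1 by omega]
  -- reindex linear independence
  have hdep : ¬ LinearIndependent K (Sum.elim v (fun _ : Unit => w)) ↔ M.det = 0 := by
    have hcomp : (fun r => M r) ∘ ((Equiv.sumCongr (Equiv.refl (Fin (n + 1)))
        (Equiv.ofUnique Unit (Fin 1))).trans finSumFinEquiv)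
        = Sum.elim v (fun _ : Unit => w) := by
      funext s
      rcases s with j | u
      · have h1 : ((Equiv.sumCongr (Equiv.refl (Fin (n + 1)))
            (Equiv.ofUnique Unit (Fin 1))).trans finSumFinEquiv) (Sum.inl j)
            = j.castSucc := by
          ext; simp
        simp only [Function.comp_apply, h1, Sum.elim_inl]
        exact hMv j
      · have h1 : ((Equiv.sumCongr (Equiv.refl (Fin (n + 1)))
            (Equiv.ofUnique Unit (Fin 1))).trans finSumFinEquiv) (Sum.inr u)
            = Fin.last (n + 1) := by
          ext; simp
        simp only [Function.comp_apply, h1, Sum.elim_inr]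
        exact hMw
    have key := (linearIndependent_equiv' (R := K) _ hcomp)
    rw [show (LinearIndependent K fun r => M r) ↔ IsUnit M from Matrix.linearIndependent_rows_iff_isUnit, Matrix.isUnit_iff_isUnit_det,
      isUnit_iff_ne_zero] at key
    rw [key, not_ne_iff]
  -- setup t'
  set t' : Fin (n + 1) → K := fun j => t ⟨j.1, j.2⟩ with ht'
  have htinj' : Function.Injective t' := fun a b hab =>
    Fin.ext (congrArg Fin.val (htinj hab))
  set V : K := (Matrix.vandermonde t').det with hVdef
  have hV : V ≠ 0 := by
    rw [hVdef, Matrix.det_vandermonde_ne_zero_iff]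
    exact htinj'
  -- the two minors
  have hsub0 : N.submatrix (Fin.last (n + 1)).succAbove ((0 : Fin (n + 2)).succAbove)
      = Matrix.of (fun r c : Fin (n + 1) => t' r * Matrix.vandermonde t' r c) := by
    ext r c
    simp only [Matrix.submatrix_apply, Fin.succAbove_last, Fin.succAbove_zero,
      hN, Matrix.of_apply, Matrix.vandermonde_apply]
    rw [dif_pos (by simp; omega : ((r.castSucc : Fin (n + 2)) : ℕ) < n + 1)]
    have : (⟨((r.castSucc : Fin (n + 2)) : ℕ), by simp; omega⟩ : Fin (n + 2 - 1)) = ⟨r.1, r.2⟩ := by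
      ext; simp
    rw [this]
    show t' r ^ ((c.succ : Fin (n + 2)) : ℕ) = t' r * t' r ^ (c : ℕ)
    rw [Fin.val_succ, pow_succ]
    ring
  have hsublast : N.submatrix (Fin.last (n + 1)).succAbove
      ((Fin.last (n + 1)).succAbove) = Matrix.vandermonde t' := by
    ext r c
    simp only [Matrix.submatrix_apply, Fin.succAbove_last,
      hN, Matrix.of_apply, Matrix.vandermonde_apply]
    rw [dif_pos (by simp; omega : ((r.castSucc : Fin (n + 2)) : ℕ) < n + 1)]
    have : (⟨((r.castSucc : Fin (n + 2)) : ℕ), by simp; omega⟩ : Fin (n + 2 - 1)) = ⟨r.1, r.2⟩ := by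
      ext; simp
    rw [this]
    show t' r ^ ((c.castSucc : Fin (n + 2)) : ℕ) = t' r ^ (c : ℕ)
    rw [Fin.coe_castSucc]
  -- expansion along the last row
  have hNlast0 : N (Fin.last (n + 1)) 0 = a₁ := by
    simp only [hN, Matrix.of_apply]
    rw [dif_neg (by simp)]
    simp
  have hNlastlast : N (Fin.last (n + 1)) (Fin.last (n + 1)) = a₂ := by
    simp only [hN, Matrix.of_apply]
    rw [dif_neg (by simp)]
    rw [if_neg (by simp), if_pos (by simp)]
  have hNlastmid : ∀ j : Fin n, N (Fin.last (n + 1)) (j.castSucc.succ) = 0 := by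
    intro j
    simp only [hN, Matrix.of_apply]
    rw [dif_neg (by simp)]
    rw [if_neg (by simp), if_neg (by simp [Fin.ext_iff]; omega)]
  have hdetN : N.det = (-1) ^ (n + 1) * a₁ * ((∏ j, t' j) * V) + a₂ * V := by
    rw [Matrix.det_succ_row N (Fin.last (n + 1)), Fin.sum_univ_succ, Fin.sum_univ_castSucc]
    rw [Finset.sum_eq_zero (fun j _ => by rw [hNlastmid j]; ring)]
    simp only [Fin.succ_last, Nat.succ_eq_add_one, Fin.val_last, Fin.val_zero, add_zero]
    rw [hNlast0, hNlastlast, hsub0, hsublast,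
      Matrix.det_mul_column t' (Matrix.vandermonde t'), ← hVdef]
    rw [show (n + 1) + (n + 1) = 2 * (n + 1) by ring, pow_mul, neg_one_sq, one_pow]
    ring
  -- sign of the permutation
  have hsign : M.det = (-1 : K) ^ n * N.det := by
    rw [hM, Matrix.det_permute' σ N, hσ, Fin.sign_cycleRange]
    norm_num
  -- final assembly
  have hprod : (∏ j, t j) = ∏ j, t' j := rfl
  rw [hdep, hsign, hdetN, hprod]
  have hb2 : (-1 : K) ^ n * (-1 : K) ^ n = 1 := by
    rw [← mul_pow]; norm_num
  constructor
  · intro h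
    have h2 : (-1 : K) ^ (n + 1) * a₁ * ((∏ j, t' j) * V) + a₂ * V = 0 :=
      (mul_eq_zero.mp h).resolve_left (pow_ne_zero _ (by norm_num))
    have h3 : (-1 : K) ^ (n + 1) * a₁ * (∏ j, t' j) + a₂ = 0 :=
      (mul_eq_zero.mp (show V * ((-1 : K) ^ (n + 1) * a₁ * (∏ j, t' j) + a₂) = 0 by
        linear_combination h2)).resolve_left hV
    linear_combination ((-1 : K) ^ n) * h3 + a₁ * (∏ j, t' j) * hb2
  · intro h
    linear_combination V * h - a₁ * (∏ j, t' j) * V * hb2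
end

section
/- Let K be a field, β ∈ K, and let m, ℓ, d be positive integers with d ≤ m and d ≤ ℓ. Let V be the K-linear subspace of K[x] × K[y] consisting of the pairs (f, g) with f(x) = f_1(x) + x^{m−d}·g_1(βx) and g(y) = g_1(y) + y^d·g_2(y), where deg f_1 ≤ m−d−1, deg g_1 ≤ d−1 and deg g_2 ≤ ℓ−d−1. Let t_1, t_2 be nonnegative integers with t_1 + t_2 = d, let x_1, …, x_{m−t_1} be pairwise distinct elements of K and y_1, …, y_{ℓ−t_2} pairwise distinct elements of K, and set r(x) = (x − x_1)⋯(x − x_{m−t_1}) and s(y) = (y − y_1)⋯(y − y_{ℓ−t_2}). Then a pair (f, g) ∈ V satisfies f(x_i) = 0 for all i = 1, …, m−t_1 and g(y_j) = 0 for all j = 1, …, ℓ−t_2 if and only if there exist polynomials a, b ∈ K[x] with deg a ≤ t_1 − 1 and deg b ≤ t_2 − 1 such that f = a·r and g = b·s. -/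
open Polynomial

lemma aux_div {K : Type*} [Field K] {n t : ℕ} (z : Fin n → K)
    (hz : Function.Injective z) (f : Polynomial K)
    (hf : f.degree < ((n + t : ℕ) : WithBot ℕ))
    (h0 : ∀ i, f.eval (z i) = 0) :
    ∃ a : Polynomial K, a ∈ Polynomial.degreeLT K t ∧
      f = a * ∏ i, (X - C (z i)) := by
  have hdvd : (∏ i, (X - C (z i))) ∣ f := by
    apply Finset.prod_dvd_of_coprime
    · intro i _ j _ hij
      exact Polynomial.isCoprime_X_sub_C_of_isUnit_sub
        (by simpa [sub_eq_zero, isUnit_iff_ne_zero] using fun h => hij (hz h))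
    · intro i _
      exact (dvd_iff_isRoot).2 (h0 i)
  obtain ⟨a, ha⟩ := hdvd
  refine ⟨a, ?_, by rw [ha]; ring⟩
  rw [Polynomial.mem_degreeLT]
  rcases eq_or_ne a 0 with rfl | ha0
  · simp only [Polynomial.degree_zero]
    exact WithBot.bot_lt_coe _
  · have hr : (∏ i : Fin n, (X - C (z i))).degree = (n : WithBot ℕ) := by
      rw [Polynomial.degree_prod]
      simp
    have hdeg : f.degree = a.degree + (n : WithBot ℕ) := by
      rw [ha, Polynomial.degree_mul, hr]; ring
    rw [hdeg, Polynomial.degree_eq_natDegree ha0] at hf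
    rw [Polynomial.degree_eq_natDegree ha0]
    have h2 : ((a.natDegree + n : ℕ) : WithBot ℕ) < ((n + t : ℕ) : WithBot ℕ) := by
      push_cast
      push_cast at hf
      convert hf using 2
    have h3 : a.natDegree + n < n + t := Nat.cast_lt.mp h2
    exact Nat.cast_lt.mpr (by omega)


lemma deg_bounds {K : Type*} [Field K] {β : K} {m ℓ d : ℕ} (hdm : d ≤ m) (hdl : d ≤ ℓ)
    {f g : Polynomial K} (hfg : ∃ f₁ g₁ g₂ : Polynomial K,
    f₁ ∈ Polynomial.degreeLT K (m - d) ∧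
    g₁ ∈ Polynomial.degreeLT K d ∧
    g₂ ∈ Polynomial.degreeLT K (ℓ - d) ∧
    f = f₁ + Polynomial.X ^ (m - d) * g₁.comp (Polynomial.C β * Polynomial.X) ∧
    g = g₁ + Polynomial.X ^ d * g₂) :
    f.degree < (m : WithBot ℕ) ∧ g.degree < (ℓ : WithBot ℕ) := by
  obtain ⟨f₁, g₁, g₂, h1, h2, h3, hf, hg⟩ := hfg
  rw [Polynomial.mem_degreeLT] at h1 h2 h3
  have hcomp : (g₁.comp (C β * X)).degree < (d : WithBot ℕ) := by
    rcases eq_or_ne g₁ 0 with rfl | hg1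
    · simp only [Polynomial.zero_comp, Polynomial.degree_zero]
      exact WithBot.bot_lt_coe _
    · calc (g₁.comp (C β * X)).degree ≤ ((g₁.comp (C β * X)).natDegree : WithBot ℕ) :=
            Polynomial.degree_le_natDegree
        _ ≤ ((g₁.natDegree * (C β * X).natDegree : ℕ) : WithBot ℕ) := by
            exact_mod_cast Nat.cast_le.mpr (Polynomial.natDegree_comp_le)
        _ ≤ (g₁.natDegree : WithBot ℕ) := by
            exact_mod_cast Nat.cast_le.mpr (by
              have : (C β * X : Polynomial K).natDegree ≤ 1 := by
                rcases eq_or_ne β 0 with rfl | hb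
                · simp
                · rw [Polynomial.natDegree_C_mul hb, Polynomial.natDegree_X]
              exact (by simpa only [mul_one] using Nat.mul_le_mul_left g₁.natDegree this :
                g₁.natDegree * (C β * X).natDegree ≤ g₁.natDegree))
        _ < (d : WithBot ℕ) := by
            rw [← Polynomial.degree_eq_natDegree hg1]; exact h2
  have hmul : (X ^ (m - d) * g₁.comp (C β * X) : Polynomial K).degree < (m : WithBot ℕ) := by
    rcases eq_or_ne (g₁.comp (C β * X)) 0 with hc | hc
    · rw [hc, mul_zero, Polynomial.degree_zero]; exact WithBot.bot_lt_coe _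
    · rw [Polynomial.degree_mul, Polynomial.degree_X_pow]
      calc ((m - d : ℕ) : WithBot ℕ) + (g₁.comp (C β * X)).degree
          < ((m - d : ℕ) : WithBot ℕ) + (d : WithBot ℕ) := by
            exact WithBot.add_lt_add_left (by simp) hcomp
        _ = (m : WithBot ℕ) := by
            rw [← Nat.cast_add]; congr 1; omega
  have hfd : f.degree < (m : WithBot ℕ) := by
    rw [hf]
    exact lt_of_le_of_lt (Polynomial.degree_add_le _ _)
      (max_lt (lt_of_lt_of_le h1 (Nat.cast_le.mpr (Nat.sub_le m d))) hmul)
  have hmul2 : (X ^ d * g₂ : Polynomial K).degree < (ℓ : WithBot ℕ) := by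
    rcases eq_or_ne g₂ 0 with rfl | hc
    · rw [mul_zero, Polynomial.degree_zero]; exact WithBot.bot_lt_coe _
    · rw [Polynomial.degree_mul, Polynomial.degree_X_pow]
      calc ((d : ℕ) : WithBot ℕ) + g₂.degree
          < ((d : ℕ) : WithBot ℕ) + ((ℓ - d : ℕ) : WithBot ℕ) := WithBot.add_lt_add_left (by simp) h3
        _ = (ℓ : WithBot ℕ) := by rw [← Nat.cast_add]; congr 1; omega
  have hgd : g.degree < (ℓ : WithBot ℕ) := by
    rw [hg]
    exact lt_of_le_of_lt (Polynomial.degree_add_le _ _)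
      (max_lt (lt_of_lt_of_le h2 (Nat.cast_le.mpr hdl)) hmul2)
  exact ⟨hfd, hgd⟩


/-- The space `V` of pairs `(f, g)` with `f(x) = f₁(x) + x^{m-d} g₁(βx)` and
`g(y) = g₁(y) + y^d g₂(y)`, where `deg f₁ ≤ m-d-1`, `deg g₁ ≤ d-1`, `deg g₂ ≤ ℓ-d-1`. -/
def Vset (K : Type*) [Field K] (β : K) (m ℓ d : ℕ) :
    Set (Polynomial K × Polynomial K) :=
  {p | ∃ f₁ g₁ g₂ : Polynomial K,
    f₁ ∈ Polynomial.degreeLT K (m - d) ∧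
    g₁ ∈ Polynomial.degreeLT K d ∧
    g₂ ∈ Polynomial.degreeLT K (ℓ - d) ∧
    p.1 = f₁ + Polynomial.X ^ (m - d) * g₁.comp (Polynomial.C β * Polynomial.X) ∧
    p.2 = g₁ + Polynomial.X ^ d * g₂}


theorem stmt11 (K : Type*) [Field K] (β : K) (m ℓ d : ℕ)
    (hm : 0 < m) (hl : 0 < ℓ) (hd : 0 < d) (hdm : d ≤ m) (hdl : d ≤ ℓ)
    (t₁ t₂ : ℕ) (ht : t₁ + t₂ = d)
    (x : Fin (m - t₁) → K) (y : Fin (ℓ - t₂) → K)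
    (hxinj : Function.Injective x) (hyinj : Function.Injective y)
    (f g : Polynomial K) (hfg : (f, g) ∈ Vset K β m ℓ d) :
    ((∀ i, f.eval (x i) = 0) ∧ (∀ j, g.eval (y j) = 0)) ↔
      ∃ a b : Polynomial K,
        a ∈ Polynomial.degreeLT K t₁ ∧ b ∈ Polynomial.degreeLT K t₂ ∧
        f = a * ∏ i, (Polynomial.X - Polynomial.C (x i)) ∧
        g = b * ∏ j, (Polynomial.X - Polynomial.C (y j)) := by
  obtain ⟨hfd, hgd⟩ := deg_bounds hdm hdl hfg
  constructor
  · rintro ⟨hx0, hy0⟩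
    obtain ⟨a, ha, hfa⟩ := aux_div x hxinj f
      (by rwa [show m - t₁ + t₁ = m by omega]) hx0
    obtain ⟨b, hb, hgb⟩ := aux_div y hyinj g
      (by rwa [show ℓ - t₂ + t₂ = ℓ by omega]) hy0
    exact ⟨a, b, ha, hb, hfa, hgb⟩
  · rintro ⟨a, b, ha, hb, rfl, rfl⟩
    constructor
    · intro i
      rw [Polynomial.eval_mul, Polynomial.eval_prod]
      rw [Finset.prod_eq_zero (Finset.mem_univ i) (by simp)]
      ring
    · intro j
      rw [Polynomial.eval_mul, Polynomial.eval_prod]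
      rw [Finset.prod_eq_zero (Finset.mem_univ j) (by simp)]
      ring
end
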